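/- arXiv:1803.06765 — 2 statements merged into one kernel-verified Lean document; each statement's English description precedes it below -/
import Mathlib

section
/- Let B ∈ ℝ^{M×N}. For every x ∈ ℝ^N satisfying ‖BᵀB x‖_∞ ≤ 1 (i.e., |[BᵀB x]_n| ≤ 1 for all n), the GMC penalty satisfies ψ_B(x) = ‖x‖₁ − (1/2)‖B x‖₂². -/
open Matrix

/-- The ℓ₁ norm on `ℝ^N`. -/
noncomputable def norm1 {N : ℕ} (v : Fin N → ℝ) : ℝ := ∑ n, |v n|

/-- The squared Euclidean (ℓ₂) norm on `ℝ^M`. -/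
def norm2sq {M : ℕ} (u : Fin M → ℝ) : ℝ := ∑ m, (u m) ^ 2

/-- The generalized Huber function
`S_B(x) = inf_v ( ‖v‖₁ + (1/2) ‖B(x - v)‖₂² )`. -/
noncomputable def genHuber {M N : ℕ} (B : Matrix (Fin M) (Fin N) ℝ) (x : Fin N → ℝ) : ℝ :=
  ⨅ v : Fin N → ℝ, (norm1 v + (1 / 2) * norm2sq (B.mulVec (x - v)))

/-- The generalized MC (GMC) penalty `ψ_B(x) = ‖x‖₁ - S_B(x)`. -/
noncomputable def gmcPenalty {M N : ℕ} (B : Matrix (Fin M) (Fin N) ℝ) (x : Fin N → ℝ) : ℝ :=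
  norm1 x - genHuber B x

lemma norm2sq_nonneg {M : ℕ} (u : Fin M → ℝ) : 0 ≤ norm2sq u :=
  Finset.sum_nonneg fun m _ => sq_nonneg _

lemma key_bound {M N : ℕ} (B : Matrix (Fin M) (Fin N) ℝ)
    (x : Fin N → ℝ) (h : ∀ n, |(Bᵀ * B).mulVec x n| ≤ 1) (v : Fin N → ℝ) :
    (1 / 2) * norm2sq (B.mulVec x) ≤ norm1 v + (1 / 2) * norm2sq (B.mulVec (x - v)) := by
  have h2 : (B.mulVec x) ⬝ᵥ (B.mulVec v) = (Bᵀ * B).mulVec x ⬝ᵥ v := by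
    rw [Matrix.dotProduct_mulVec, ← Matrix.mulVec_transpose, Matrix.mulVec_mulVec]
  have hexp : norm2sq (B.mulVec (x - v)) =
      norm2sq (B.mulVec x) - 2 * ((Bᵀ * B).mulVec x ⬝ᵥ v) + norm2sq (B.mulVec v) := by
    rw [← h2]
    simp only [norm2sq, Matrix.mulVec_sub, dotProduct, Pi.sub_apply]
    rw [Finset.mul_sum, ← Finset.sum_sub_distrib, ← Finset.sum_add_distrib]
    exact Finset.sum_congr rfl fun m _ => by ring
  have hdot : (Bᵀ * B).mulVec x ⬝ᵥ v ≤ norm1 v := by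
    calc (Bᵀ * B).mulVec x ⬝ᵥ v ≤ ∑ n, |(Bᵀ * B).mulVec x n * v n| :=
          Finset.sum_le_sum fun n _ => le_abs_self _
      _ ≤ ∑ n, |v n| := by
          refine Finset.sum_le_sum fun n _ => ?_
          rw [abs_mul]
          calc |(Bᵀ * B).mulVec x n| * |v n| ≤ 1 * |v n| :=
                mul_le_mul_of_nonneg_right (h n) (abs_nonneg _)
            _ = |v n| := one_mul _
  have := norm2sq_nonneg (B.mulVec v)
  rw [hexp]; linarith

lemma genHuber_eq {M N : ℕ} (B : Matrix (Fin M) (Fin N) ℝ)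
    (x : Fin N → ℝ) (h : ∀ n, |(Bᵀ * B).mulVec x n| ≤ 1) :
    genHuber B x = (1 / 2) * norm2sq (B.mulVec x) := by
  have hbdd : BddBelow (Set.range fun v : Fin N → ℝ =>
      norm1 v + (1 / 2) * norm2sq (B.mulVec (x - v))) := by
    refine ⟨(1 / 2) * norm2sq (B.mulVec x), ?_⟩
    rintro y ⟨v, rfl⟩
    exact key_bound B x h v
  apply le_antisymm
  · have := ciInf_le hbdd (0 : Fin N → ℝ)
    simpa [norm1, genHuber] using this
  · exact le_ciInf (key_bound B x h)

/-- If `‖BᵀB x‖_∞ ≤ 1`, then `ψ_B(x) = ‖x‖₁ - (1/2)‖Bx‖₂²`. -/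
theorem gmcPenalty_eq_near_zero {M N : ℕ} (B : Matrix (Fin M) (Fin N) ℝ)
    (x : Fin N → ℝ) (h : ∀ n, |(Bᵀ * B).mulVec x n| ≤ 1) :
    gmcPenalty B x = norm1 x - (1 / 2) * norm2sq (B.mulVec x) := by
  rw [gmcPenalty, genHuber_eq B x h]
end

section
/- Let y ∈ ℝ^M, A ∈ ℝ^{M×N}, λ > 0, and 0 < γ < 1. Suppose AᵀA is the diagonal matrix diag(α₁², …, α_N²) with α_n > 0 for all n, and set B = √(γ/λ) · A. Then the vector x* ∈ ℝ^N with components x*_n = firm( [Aᵀy]_n / α_n² ; λ/α_n² , λ/(γ α_n²) ) is a global minimizer of F(x) = (1/2)‖y − A x‖₂² + λ ψ_B(x); that is, F(x*) ≤ F(x) for all x ∈ ℝ^N. -/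
open Matrix

/-- The firm threshold function with parameters `0 < λ < μ`. -/
noncomputable def firm (lam mu y : ℝ) : ℝ :=
  if |y| ≤ lam then 0
  else if |y| ≤ mu then mu * (|y| - lam) / (mu - lam) * Real.sign y
  else y

/-! Since `AᵀA` is diagonal, so is `BᵀB`, and everything separates over coordinates: the
generalized Huber function is a sum of scalar Huber functions, hence `ψ_B` is a sum of scalar
minimax-concave penalties, and completing the square turns `F` into a sum of scalar problems
`(t - z)²/2 + γμ · mcPenalty μ t` with `μ = λ/(γα²)`. Firm thresholding `firm(z; γμ, μ)` solves
each of them because `γ < 1`: the penalty lies above its convex minorant `|t| - t²/(2μ)`, with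
equality on `|t| ≤ μ`, which settles the regimes `|z| ≤ μ`; for `|z| > μ` the point `t = z` costs
only the constant value `γμ²/2` of the penalty beyond `μ`, and inside `[-μ, μ]` the data term
`(t - z)²/2 ≥ (μ - |t|)²/2` pays for the difference. -/

noncomputable def huber (b t : ℝ) : ℝ :=
  if |t| ≤ b⁻¹ then b / 2 * t ^ 2 else |t| - (2 * b)⁻¹

theorem isLeast_huber {b : ℝ} (hb : 0 < b) (t : ℝ) :
    IsLeast (Set.range fun v => |v| + b / 2 * (t - v) ^ 2) (huber b t) := by
  have hbb : b * b⁻¹ = 1 := mul_inv_cancel₀ hb.ne'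
  refine ⟨?_, ?_⟩
  · unfold huber
    split_ifs with h
    · exact ⟨0, by simp⟩
    · push Not at h
      rcases le_or_gt 0 t with ht | ht
      · refine ⟨t - b⁻¹, ?_⟩
        rw [abs_of_nonneg ht] at h ⊢
        simp only [abs_of_nonneg (sub_nonneg.mpr h.le)]
        field_simp
        ring
      · refine ⟨t + b⁻¹, ?_⟩
        rw [abs_of_neg ht] at h ⊢
        simp only [abs_of_neg (by linarith : t + b⁻¹ < 0)]
        field_simp
        ring
  · rintro _ ⟨v, rfl⟩
    dsimp only
    unfold huber
    split_ifs with h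
    · have hbt : b * |t| ≤ 1 := hbb ▸ mul_le_mul_of_nonneg_left h hb.le
      have : b * (t * v) ≤ |v| :=
        calc b * (t * v) ≤ b * (|t| * |v|) :=
              mul_le_mul_of_nonneg_left ((abs_mul t v).symm ▸ le_abs_self _) hb.le
          _ ≤ |v| := by nlinarith [abs_nonneg v]
      nlinarith [mul_nonneg hb.le (sq_nonneg v)]
    · have hamgm : |t - v| - (2 * b)⁻¹ ≤ b / 2 * (t - v) ^ 2 := by
        have hsq : b / 2 * (|t - v| - b⁻¹) ^ 2
            = b / 2 * (t - v) ^ 2 - |t - v| + (2 * b)⁻¹ := by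
          rw [sub_sq, sq_abs]; field_simp
        nlinarith [mul_nonneg hb.le (sq_nonneg (|t - v| - b⁻¹))]
      linarith [abs_sub_abs_le_abs_sub t v]

theorem norm2sq_eq_dotProduct {M : ℕ} (u : Fin M → ℝ) : norm2sq u = u ⬝ᵥ u := by
  simp [norm2sq, dotProduct, sq]

theorem norm2sq_mulVec_of_transpose_mul_eq_diagonal {M N : ℕ} {A : Matrix (Fin M) (Fin N) ℝ}
    {d : Fin N → ℝ} (hA : Aᵀ * A = diagonal d) (w : Fin N → ℝ) :
    norm2sq (A *ᵥ w) = ∑ n, d n * w n ^ 2 := by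
  rw [norm2sq_eq_dotProduct, dotProduct_mulVec, ← mulVec_transpose, mulVec_mulVec, hA,
    dotProduct_comm]
  simp only [dotProduct, mulVec_diagonal]
  exact Finset.sum_congr rfl fun n _ => by ring

theorem norm2sq_sub_mulVec_of_transpose_mul_eq_diagonal {M N : ℕ}
    {A : Matrix (Fin M) (Fin N) ℝ} {d : Fin N → ℝ} (hA : Aᵀ * A = diagonal d)
    (y : Fin M → ℝ) (x : Fin N → ℝ) :
    norm2sq (y - A *ᵥ x) = norm2sq y + ∑ n, (d n * x n ^ 2 - 2 * (Aᵀ *ᵥ y) n * x n) := by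
  have hcross : ∑ n, 2 * (Aᵀ *ᵥ y) n * x n = 2 * (y ⬝ᵥ A *ᵥ x) := by
    rw [dotProduct_mulVec, ← mulVec_transpose, dotProduct, Finset.mul_sum]
    simp only [mul_assoc]
  rw [Finset.sum_sub_distrib, ← norm2sq_mulVec_of_transpose_mul_eq_diagonal hA, hcross]
  simp only [norm2sq_eq_dotProduct, sub_dotProduct, dotProduct_sub, dotProduct_comm (A *ᵥ x) y]
  ring

theorem genHuber_eq_sum_huber {M N : ℕ} {B : Matrix (Fin M) (Fin N) ℝ} {b : Fin N → ℝ}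
    (hB : Bᵀ * B = diagonal b) (hb : ∀ n, 0 < b n) (x : Fin N → ℝ) :
    genHuber B x = ∑ n, huber (b n) (x n) := by
  have hsplit : (fun v => norm1 v + 1 / 2 * norm2sq (B *ᵥ (x - v)))
      = fun v => ∑ n, (|v n| + b n / 2 * (x n - v n) ^ 2) := by
    funext v
    rw [norm2sq_mulVec_of_transpose_mul_eq_diagonal hB, norm1, Finset.mul_sum,
      ← Finset.sum_add_distrib]
    exact Finset.sum_congr rfl fun n _ => by simp only [Pi.sub_apply]; ring
  have hleast : IsLeast (Set.range fun v => norm1 v + 1 / 2 * norm2sq (B *ᵥ (x - v)))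
      (∑ n, huber (b n) (x n)) := by
    rw [hsplit]
    refine ⟨?_, ?_⟩
    · choose v hv using fun n => (isLeast_huber (hb n) (x n)).1
      exact ⟨v, Finset.sum_congr rfl fun n _ => hv n⟩
    · rintro _ ⟨v, rfl⟩
      exact Finset.sum_le_sum fun n _ => (isLeast_huber (hb n) (x n)).2 ⟨v n, rfl⟩
  exact hleast.isGLB.ciInf_eq

namespace Real

theorem sign_mul_self_eq_abs (r : ℝ) : sign r * r = |r| := by
  obtain hn | rfl | hp := lt_trichotomy r 0
  · rw [sign_of_neg hn, abs_of_neg hn, neg_one_mul]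
  · simp
  · rw [sign_of_pos hp, abs_of_pos hp, one_mul]

theorem abs_sign_of_ne_zero {r : ℝ} (hr : r ≠ 0) : |sign r| = 1 := by
  rcases sign_apply_eq_of_ne_zero r hr with h | h <;> simp [h]

end Real

noncomputable def mcPenalty (μ t : ℝ) : ℝ :=
  if |t| ≤ μ then |t| - t ^ 2 / (2 * μ) else μ / 2

theorem abs_sub_huber {b : ℝ} (hb : 0 < b) (t : ℝ) : |t| - huber b t = mcPenalty b⁻¹ t := by
  unfold huber mcPenalty
  split_ifs
  · field_simp
  · field_simp; ring

theorem abs_sub_sq_div_le_mcPenalty {μ : ℝ} (hμ : 0 < μ) (t : ℝ) :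
    |t| - t ^ 2 / (2 * μ) ≤ mcPenalty μ t := by
  unfold mcPenalty
  split_ifs
  · exact le_rfl
  · have : μ / 2 - (|t| - t ^ 2 / (2 * μ)) = (|t| - μ) ^ 2 / (2 * μ) := by
      rw [← sq_abs t]; field_simp; ring
    linarith [div_nonneg (sq_nonneg (|t| - μ)) (by positivity : (0 : ℝ) ≤ 2 * μ)]

theorem sq_abs_sub_add_le_sq_sub_add_mcPenalty {γ μ : ℝ} (hμ : 0 < μ) (hγ : 0 ≤ γ)
    (z t : ℝ) :
    (|t| - |z|) ^ 2 / 2 + γ * μ * |t| - γ * |t| ^ 2 / 2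
      ≤ (t - z) ^ 2 / 2 + γ * μ * mcPenalty μ t := by
  have hpen := mul_le_mul_of_nonneg_left (abs_sub_sq_div_le_mcPenalty hμ t)
    (mul_nonneg hγ hμ.le)
  have hexpand : γ * μ * (|t| - t ^ 2 / (2 * μ)) = γ * μ * |t| - γ * |t| ^ 2 / 2 := by
    rw [sq_abs]; field_simp
  have hzt : z * t ≤ |z| * |t| := abs_mul z t ▸ le_abs_self _
  nlinarith [sq_abs t, sq_abs z]

theorem firm_minimizes_sq_sub_add_mcPenalty {γ μ : ℝ} (hμ : 0 < μ) (hγ0 : 0 < γ) (hγ1 : γ < 1)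
    (z t : ℝ) :
    (firm (γ * μ) μ z - z) ^ 2 / 2 + γ * μ * mcPenalty μ (firm (γ * μ) μ z)
      ≤ (t - z) ^ 2 / 2 + γ * μ * mcPenalty μ t := by
  have hlow := sq_abs_sub_add_le_sq_sub_add_mcPenalty hμ hγ0.le z t
  have hγ1' := sub_nonneg.2 hγ1.le
  unfold firm
  split_ifs with hzlo hzhi
  · have h0 : mcPenalty μ 0 = 0 := by simp [mcPenalty, hμ.le]
    rw [h0]
    nlinarith [mul_le_mul_of_nonneg_right hzlo (abs_nonneg t),
      mul_nonneg hγ1' (sq_nonneg |t|), sq_abs z]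
  · push Not at hzlo
    set m := μ * (|z| - γ * μ) / (μ - γ * μ) with hm_def
    have hm : (1 - γ) * m = |z| - γ * μ := by
      have h1γ : 1 - γ ≠ 0 := sub_ne_zero.2 hγ1.ne'
      rw [hm_def, show μ - γ * μ = μ * (1 - γ) by ring, mul_div_mul_left _ _ hμ.ne']
      field_simp
    have hm0 : 0 < m := by nlinarith
    have hmμ : m ≤ μ := by nlinarith
    have hz0 : z ≠ 0 := by rintro rfl; simp at hzlo; nlinarith
    have hwabs : |m * Real.sign z| = m := by
      rw [abs_mul, Real.abs_sign_of_ne_zero hz0, mul_one, abs_of_pos hm0]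
    have hwsq : (m * Real.sign z) ^ 2 = m ^ 2 := by rw [← sq_abs, hwabs]
    have hzw : m * Real.sign z * z = m * |z| := by rw [mul_assoc, Real.sign_mul_self_eq_abs]
    have hw : mcPenalty μ (m * Real.sign z) = m - m ^ 2 / (2 * μ) := by
      rw [mcPenalty, if_pos (hwabs.symm ▸ hmμ), hwabs, hwsq]
    rw [hw]
    have hexpand : γ * μ * (m - m ^ 2 / (2 * μ)) = γ * μ * m - γ * m ^ 2 / 2 := by field_simp
    nlinarith [mul_nonneg hγ1' (sq_nonneg (|t| - m)), sq_abs z]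
  · push Not at hzlo hzhi
    rw [sub_self, mcPenalty, if_neg (not_le.2 hzhi)]
    by_cases ht : |t| ≤ μ
    · have hzt : μ - |t| ≤ |z| - |t| := by linarith
      nlinarith [mul_nonneg hγ1' (sq_nonneg (μ - |t|)), pow_le_pow_left₀ (by linarith) hzt 2]
    · rw [mcPenalty, if_neg ht]
      nlinarith [sq_nonneg (t - z)]

theorem gmcPenalty_eq_sum_mcPenalty {M N : ℕ} {B : Matrix (Fin M) (Fin N) ℝ} {b : Fin N → ℝ}
    (hB : Bᵀ * B = diagonal b) (hb : ∀ n, 0 < b n) (x : Fin N → ℝ) :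
    gmcPenalty B x = ∑ n, mcPenalty (b n)⁻¹ (x n) := by
  rw [gmcPenalty, genHuber_eq_sum_huber hB hb, norm1, ← Finset.sum_sub_distrib]
  exact Finset.sum_congr rfl fun n _ => abs_sub_huber (hb n) (x n)

/-- If `AᵀA` is diagonal with positive diagonal entries and `B = √(γ/λ) A` with
`0 < γ < 1`, then element-wise firm thresholding gives a global minimizer of the
GMC-regularized least squares cost function. -/
theorem gmc_diagonal_minimizer_firm {M N : ℕ} (y : Fin M → ℝ)
    (A : Matrix (Fin M) (Fin N) ℝ) (lam γ : ℝ) (hlam : 0 < lam)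
    (hγ0 : 0 < γ) (hγ1 : γ < 1) (α : Fin N → ℝ) (hα : ∀ n, 0 < α n)
    (hAA : Aᵀ * A = Matrix.diagonal (fun n => (α n) ^ 2)) :
    let B : Matrix (Fin M) (Fin N) ℝ := Real.sqrt (γ / lam) • A
    let xstar : Fin N → ℝ := fun n =>
      firm (lam / (α n) ^ 2) (lam / (γ * (α n) ^ 2)) ((Aᵀ.mulVec y) n / (α n) ^ 2)
    let F : (Fin N → ℝ) → ℝ := fun x =>
      (1 / 2) * norm2sq (y - A.mulVec x) + lam * gmcPenalty B x
    ∀ x : Fin N → ℝ, F xstar ≤ F x := by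
  intro B xstar F x
  set c := Aᵀ *ᵥ y
  set μ : Fin N → ℝ := fun n => lam / (γ * α n ^ 2)
  have hα2 : ∀ n, 0 < α n ^ 2 := fun n => pow_pos (hα n) 2
  have hμ : ∀ n, 0 < μ n := fun n => div_pos hlam (mul_pos hγ0 (hα2 n))
  have hγμ : ∀ n, γ * μ n = lam / α n ^ 2 := fun n => by
    simp only [μ]; field_simp
  have hBB : Bᵀ * B = diagonal fun n => (μ n)⁻¹ := by
    rw [show B = √(γ / lam) • A from rfl, transpose_smul, smul_mul, Matrix.mul_smul, hAA,
      smul_smul, Real.mul_self_sqrt (div_pos hγ0 hlam).le, ← diagonal_smul]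
    congr 1
    funext n
    simp only [μ, Pi.smul_apply, smul_eq_mul, inv_div]
    ring
  have hF : ∀ x, F x = norm2sq y / 2 + ∑ n, (α n ^ 2 * ((x n - c n / α n ^ 2) ^ 2 / 2
      + γ * μ n * mcPenalty (μ n) (x n)) - c n ^ 2 / (2 * α n ^ 2)) := by
    intro x
    have hterm : ∀ n, α n ^ 2 * ((x n - c n / α n ^ 2) ^ 2 / 2 + γ * μ n * mcPenalty (μ n) (x n))
        - c n ^ 2 / (2 * α n ^ 2)
        = (α n ^ 2 * x n ^ 2 - 2 * c n * x n) / 2 + lam * mcPenalty (μ n) (x n) := fun n => by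
      rw [hγμ]; field_simp [(hα n).ne']; ring
    simp only [F, gmcPenalty_eq_sum_mcPenalty hBB (fun n => inv_pos.2 (hμ n)), inv_inv,
      norm2sq_sub_mulVec_of_transpose_mul_eq_diagonal hAA, hterm, Finset.sum_add_distrib,
      ← Finset.sum_div, ← Finset.mul_sum]
    ring
  rw [hF xstar, hF x]
  refine add_le_add_right (Finset.sum_le_sum fun n _ => sub_le_sub_right
    (mul_le_mul_of_nonneg_left ?_ (hα2 n).le) _) _
  have hmin := firm_minimizes_sq_sub_add_mcPenalty (hμ n) hγ0 hγ1 (c n / α n ^ 2) (x n)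
  rw [hγμ] at hmin ⊢
  exact hmin
end
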